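/- Let γ₁, γ₂ ∈ [0,1], α₁ = √(1−γ₁), α₂ = √(1−γ₂), and let ε_PD be the two-qubit phase damping channel with Kraus operators K_{ab} = E_a^{(γ₁)} ⊗ E_b^{(γ₂)} (a,b ∈ {0,1}), where E₀^{(γ)} = diag(1, √(1−γ)) and E₁^{(γ)} = diag(0, √γ). Then the robustness-of-imaginarity decay of the maximal imaginary state satisfies F_R(M₊ ⊗ M₊) − F_R(ε_PD(M₊ ⊗ M₊)) = 1 − (α₁ + α₂ + |α₁ − α₂|)/2. -/

import Mathlib

open Matrix Kronecker BigOperators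
open scoped ComplexOrder

noncomputable section

/-- A density matrix: positive semidefinite with trace 1. -/
def IsDensityMatrix {n : Type*} [Fintype n] [DecidableEq n] (ρ : Matrix n n ℂ) : Prop :=
  ρ.PosSemidef ∧ ρ.trace = 1

/-- The l₁-norm imaginarity measure: sum of |Im ρᵢⱼ| over off-diagonal entries. -/
noncomputable def Fl1 {n : Type*} [Fintype n] [DecidableEq n] (ρ : Matrix n n ℂ) : ℝ :=
  ∑ i, ∑ j, if i = j then 0 else |(ρ i j).im|

/-- The trace norm ‖M‖₁ = Tr √(M†M). -/
noncomputable def traceNorm {n : Type*} [Fintype n] [DecidableEq n] (M : Matrix n n ℂ) : ℝ :=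
  (((Matrix.posSemidef_conjTranspose_mul_self M).1.eigenvectorUnitary.1 *
      diagonal ((fun x : ℝ => (x : ℂ)) ∘ (√·) ∘ (Matrix.posSemidef_conjTranspose_mul_self M).1.eigenvalues) *
      (star (Matrix.posSemidef_conjTranspose_mul_self M).1.eigenvectorUnitary : Matrix n n ℂ)).trace).re

/-- The robustness of imaginarity: (1/2)‖ρ − ρᵀ‖₁. -/
noncomputable def FR {n : Type*} [Fintype n] [DecidableEq n] (ρ : Matrix n n ℂ) : ℝ :=
  traceNorm (ρ - ρᵀ) / 2

/-- Von Neumann entropy (base-2), via eigenvalues of a Hermitian matrix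
(junk value 0 if not Hermitian). -/
noncomputable def vnEntropy {n : Type*} [Fintype n] [DecidableEq n] (σ : Matrix n n ℂ) : ℝ :=
  if h : σ.IsHermitian then -∑ j, (h.eigenvalues j) * Real.logb 2 (h.eigenvalues j) else 0

/-- The relative entropy of imaginarity: S(Re ρ) − S(ρ), Re ρ = (ρ + ρᵀ)/2. -/
noncomputable def Fr {n : Type*} [Fintype n] [DecidableEq n] (ρ : Matrix n n ℂ) : ℝ :=
  vnEntropy ((1/2 : ℂ) • (ρ + ρᵀ)) - vnEntropy ρ

/-- The canonical single-qubit state ρ_A. -/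
noncomputable def rhoA (A : ℝ) : Matrix (Fin 2) (Fin 2) ℂ :=
  !![(((1 + A) / 2 : ℝ) : ℂ), -(Complex.I / 2) * (Real.sqrt (1 - A ^ 2) : ℂ);
     (Complex.I / 2) * (Real.sqrt (1 - A ^ 2) : ℂ), (((1 - A) / 2 : ℝ) : ℂ)]

/-- Density matrix of the maximal imaginary state |+⟩ = (|0⟩ + i|1⟩)/√2. -/
noncomputable def Mplus : Matrix (Fin 2) (Fin 2) ℂ :=
  (1/2 : ℂ) • !![1, -Complex.I; Complex.I, 1]

/-- Single-qubit phase damping Kraus operators. -/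
noncomputable def pdKraus (γ : ℝ) : Fin 2 → Matrix (Fin 2) (Fin 2) ℂ :=
  ![!![1, 0; 0, (Real.sqrt (1 - γ) : ℂ)], !![0, 0; 0, (Real.sqrt γ : ℂ)]]

/-- The two-qubit phase damping channel. -/
noncomputable def pd2 (γ₁ γ₂ : ℝ) (ρ : Matrix (Fin 2 × Fin 2) (Fin 2 × Fin 2) ℂ) :
    Matrix (Fin 2 × Fin 2) (Fin 2 × Fin 2) ℂ :=
  ∑ a : Fin 2, ∑ b : Fin 2,
    (pdKraus γ₁ a ⊗ₖ pdKraus γ₂ b) * ρ * (pdKraus γ₁ a ⊗ₖ pdKraus γ₂ b)ᴴ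

/-!
Both states are products of qubit states `(1 + a Y) / 2` (Bloch vector along `y`), and phase
damping with parameter `γ` shrinks `a` by `√(1 - γ)`, so `ρ - ρᵀ` for the product state
`(1 + a Y)/2 ⊗ (1 + b Y)/2` is `(a/2) Y ⊗ 1 + (b/2) 1 ⊗ Y`. Its square is
`((a² + b²) + 2ab W) / 4` with `W = Y ⊗ Y` a Hermitian involution, so on the two-dimensional
eigenspaces `W = ±1` its absolute value is `|a ± b| / 2`, giving `F_R = (|a + b| + |a - b|) / 2`.
-/

lemma sum_kronecker_sum {α m n ι κ : Type*} [NonUnitalNonAssocSemiring α] [Fintype ι]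
    [Fintype κ] (A : ι → Matrix m m α) (B : κ → Matrix n n α) :
    ∑ a, ∑ b, A a ⊗ₖ B b = (∑ a, A a) ⊗ₖ ∑ b, B b := by
  ext ⟨i₁, i₂⟩ ⟨j₁, j₂⟩
  simp [kroneckerMap_apply, Matrix.sum_apply, Finset.sum_mul_sum]

section Involution

variable {n : Type*} [Fintype n] [DecidableEq n] {W : Matrix n n ℂ}

lemma posSemidef_one_add_of_involution (hW : W.IsHermitian) (hW2 : W * W = 1) :
    (1 + W).PosSemidef := by
  have h : 1 + W = (1 / 2 : ℝ) • ((1 + W)ᴴ * (1 + W)) := by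
    rw [conjTranspose_add, hW.eq, conjTranspose_one, mul_add, add_mul, add_mul, hW2, one_mul,
      mul_one, one_mul]
    module
  rw [h]
  exact (posSemidef_conjTranspose_mul_self _).smul (by norm_num)

lemma posSemidef_smul_one_add_add_smul_one_sub (hW : W.IsHermitian) (hW2 : W * W = 1)
    {p q : ℝ} (hp : 0 ≤ p) (hq : 0 ≤ q) : (p • (1 + W) + q • (1 - W)).PosSemidef := by
  have hneg : (1 - W).PosSemidef := by
    simpa [sub_eq_add_neg] using posSemidef_one_add_of_involution hW.neg (by simpa using hW2)
  exact ((posSemidef_one_add_of_involution hW hW2).smul hp).add (hneg.smul hq)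

lemma smul_one_add_add_smul_one_sub_mul_self (hW2 : W * W = 1) (p q : ℝ) :
    (p • (1 + W) + q • (1 - W)) * (p • (1 + W) + q • (1 - W))
      = (2 * (p ^ 2 + q ^ 2)) • 1 + (2 * (p ^ 2 - q ^ 2)) • W := by
  simp only [add_mul, mul_add, sub_mul, mul_sub, smul_mul_smul_comm, one_mul, mul_one, hW2]
  module

end Involution

section TraceNorm

open scoped MatrixOrder

variable {n : Type*} [Fintype n] [DecidableEq n]

lemma traceNorm_eq_re_trace_sqrt (M : Matrix n n ℂ) :
    traceNorm M = (CFC.sqrt (Mᴴ * M)).trace.re := by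
  rw [traceNorm, CFC.sqrt_eq_real_sqrt _ (posSemidef_conjTranspose_mul_self M).nonneg,
    cfcₙ_eq_cfc, (posSemidef_conjTranspose_mul_self M).1.cfc_eq]
  rfl

lemma traceNorm_eq_re_trace_of_mul_self {M S : Matrix n n ℂ} (hS : S.PosSemidef)
    (hSM : S * S = Mᴴ * M) : traceNorm M = S.trace.re := by
  rw [traceNorm_eq_re_trace_sqrt, CFC.sqrt_unique hSM hS.nonneg]

end TraceNorm

def pauliY : Matrix (Fin 2) (Fin 2) ℂ := !![0, -Complex.I; Complex.I, 0]

lemma pauliY_mul_self : pauliY * pauliY = 1 := by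
  ext i j
  fin_cases i <;> fin_cases j <;> simp [pauliY, mul_apply, Fin.sum_univ_two, one_apply]

lemma isHermitian_pauliY : pauliY.IsHermitian := by
  ext i j
  fin_cases i <;> fin_cases j <;> simp [pauliY]

lemma transpose_pauliY : pauliYᵀ = -pauliY := by
  ext i j
  fin_cases i <;> fin_cases j <;> simp [pauliY]

lemma trace_pauliY : pauliY.trace = 0 := by
  simp [pauliY, trace_fin_two]

lemma traceNorm_pauliY_kronecker_add (a b : ℝ) :
    traceNorm (a • (pauliY ⊗ₖ (1 : Matrix (Fin 2) (Fin 2) ℂ)) + b • (1 ⊗ₖ pauliY))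
      = 2 * (|a + b| + |a - b|) := by
  set W : Matrix (Fin 2 × Fin 2) (Fin 2 × Fin 2) ℂ := pauliY ⊗ₖ pauliY
  have hW : W.IsHermitian := by
    simp only [W, IsHermitian, conjTranspose_kronecker, isHermitian_pauliY.eq]
  have hW2 : W * W = 1 := by
    rw [← mul_kronecker_mul, pauliY_mul_self, one_kronecker_one]
  refine (traceNorm_eq_re_trace_of_mul_self
    (S := (|a + b| / 2) • (1 + W) + (|a - b| / 2) • (1 - W))
    (posSemidef_smul_one_add_add_smul_one_sub hW hW2 (by positivity) (by positivity)) ?_).trans ?_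
  · simp only [smul_one_add_add_smul_one_sub_mul_self hW2, div_pow, sq_abs, conjTranspose_add,
      conjTranspose_smul, conjTranspose_kronecker, conjTranspose_one, isHermitian_pauliY.eq,
      star_trivial, add_mul, mul_add, smul_mul_smul_comm, ← mul_kronecker_mul, pauliY_mul_self,
      one_mul, mul_one, one_kronecker_one]
    module
  · simp [W, trace_kronecker, trace_pauliY, trace_add, trace_sub, trace_smul]
    ring

def blochY (a : ℝ) : Matrix (Fin 2) (Fin 2) ℂ := (1 / 2 : ℝ) • (1 + a • pauliY)

lemma Mplus_eq_blochY_one : Mplus = blochY 1 := by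
  ext i j
  fin_cases i <;> fin_cases j <;> simp [Mplus, blochY, pauliY]

lemma transpose_blochY (a : ℝ) : (blochY a)ᵀ = blochY (-a) := by
  simp [blochY, transpose_pauliY]

lemma blochY_kronecker_sub_transpose (a b : ℝ) :
    blochY a ⊗ₖ blochY b - (blochY a ⊗ₖ blochY b)ᵀ
      = (a / 2) • (pauliY ⊗ₖ (1 : Matrix (Fin 2) (Fin 2) ℂ)) + (b / 2) • (1 ⊗ₖ pauliY) := by
  rw [← kroneckerMap_transpose, transpose_blochY, transpose_blochY]
  simp only [blochY, add_kronecker, kronecker_add, smul_kronecker, kronecker_smul]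
  module

lemma FR_blochY_kronecker (a b : ℝ) : FR (blochY a ⊗ₖ blochY b) = (|a + b| + |a - b|) / 2 := by
  rw [FR, blochY_kronecker_sub_transpose, traceNorm_pauliY_kronecker_add, ← add_div, ← sub_div,
    abs_div, abs_div, abs_two]
  ring

def pdChannel (γ : ℝ) (ρ : Matrix (Fin 2) (Fin 2) ℂ) : Matrix (Fin 2) (Fin 2) ℂ :=
  ∑ a, pdKraus γ a * ρ * (pdKraus γ a)ᴴ

lemma pd2_kronecker (γ₁ γ₂ : ℝ) (A B : Matrix (Fin 2) (Fin 2) ℂ) :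
    pd2 γ₁ γ₂ (A ⊗ₖ B) = pdChannel γ₁ A ⊗ₖ pdChannel γ₂ B := by
  simp only [pd2, pdChannel, conjTranspose_kronecker, ← mul_kronecker_mul, sum_kronecker_sum]

lemma pdChannel_eq {γ : ℝ} (h0 : 0 ≤ γ) (h1 : γ ≤ 1) (ρ : Matrix (Fin 2) (Fin 2) ℂ) :
    pdChannel γ ρ = !![ρ 0 0, √(1 - γ) * ρ 0 1; √(1 - γ) * ρ 1 0, ρ 1 1] := by
  have hs : (√γ : ℂ) * √γ = γ := by exact_mod_cast Real.mul_self_sqrt h0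
  have hs' : (√(1 - γ) : ℂ) * √(1 - γ) = 1 - γ := by
    exact_mod_cast Real.mul_self_sqrt (sub_nonneg.2 h1)
  ext i j
  simp only [pdChannel, Fin.sum_univ_two, Matrix.add_apply, mul_apply, conjTranspose_apply]
  fin_cases i <;> fin_cases j <;> simp [pdKraus]
  · ring
  · linear_combination ρ 1 1 * (hs + hs')

lemma pdChannel_blochY {γ : ℝ} (h0 : 0 ≤ γ) (h1 : γ ≤ 1) (a : ℝ) :
    pdChannel γ (blochY a) = blochY (√(1 - γ) * a) := by
  rw [pdChannel_eq h0 h1]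
  ext i j
  fin_cases i <;> fin_cases j <;> simp [blochY, pauliY] <;> ring

/-- robustness-of-imaginarity decay of M₊ ⊗ M₊ under two-qubit
phase damping. -/
theorem pd2_robustness_decay (γ₁ γ₂ : ℝ) (h₁0 : 0 ≤ γ₁) (h₁1 : γ₁ ≤ 1)
    (h₂0 : 0 ≤ γ₂) (h₂1 : γ₂ ≤ 1) :
    FR (Mplus ⊗ₖ Mplus) - FR (pd2 γ₁ γ₂ (Mplus ⊗ₖ Mplus))
      = 1 - (Real.sqrt (1 - γ₁) + Real.sqrt (1 - γ₂)
              + |Real.sqrt (1 - γ₁) - Real.sqrt (1 - γ₂)|) / 2 := by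
  rw [Mplus_eq_blochY_one, pd2_kronecker, pdChannel_blochY h₁0 h₁1, pdChannel_blochY h₂0 h₂1,
    FR_blochY_kronecker, FR_blochY_kronecker, mul_one, mul_one,
    abs_of_nonneg (add_nonneg (Real.sqrt_nonneg _) (Real.sqrt_nonneg _))]
  norm_num
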